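/- arXiv:2002.07533 — 6 statements merged into one kernel-verified Lean document; each statement's English description precedes it below -/
import Mathlib

section
/- For every δ ∈ (0,1) there exists κ > 0 such that for all ε ∈ (0,1) and all τ ∈ (0,∞), log(e + ε·τ) ≥ κ · ε^δ · log(e + τ). -/
theorem log_lower_bound (δ : ℝ) (hδ : δ ∈ Set.Ioo (0 : ℝ) 1) :
    ∃ κ > (0 : ℝ), ∀ ε ∈ Set.Ioo (0 : ℝ) 1, ∀ τ > (0 : ℝ),
      Real.log (Real.exp 1 + ε * τ) ≥ κ * ε ^ δ * Real.log (Real.exp 1 + τ) := by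
  obtain ⟨hδ0, hδ1⟩ := hδ
  refine ⟨δ / 2, by linarith, ?_⟩
  rintro ε ⟨hε0, hε1⟩ τ hτ
  have he : (0 : ℝ) < Real.exp 1 := Real.exp_pos 1
  have hL1 : (1 : ℝ) ≤ Real.log (Real.exp 1 + τ) := by
    calc (1 : ℝ) = Real.log (Real.exp 1) := (Real.log_exp 1).symm
    _ ≤ Real.log (Real.exp 1 + τ) := Real.log_le_log he (by linarith)
  have hL1' : (1 : ℝ) ≤ Real.log (Real.exp 1 + ε * τ) := by
    calc (1 : ℝ) = Real.log (Real.exp 1) := (Real.log_exp 1).symm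
    _ ≤ Real.log (Real.exp 1 + ε * τ) := Real.log_le_log he (by nlinarith)
  set L := Real.log (Real.exp 1 + τ) with hL
  set s := -Real.log ε with hs
  have hs0 : 0 ≤ s := by
    have := Real.log_nonpos hε0.le hε1.le
    simp [hs]; linarith
  have hεδ : ε ^ δ = Real.exp (-(δ * s)) := by
    rw [Real.rpow_def_of_pos hε0, hs]; ring_nf
  have hεp : (0 : ℝ) < ε ^ δ := by
    rw [hεδ]; exact Real.exp_pos _
  by_cases hcase : L ≤ 2 * s
  · -- small-ε regime: RHS ≤ δ s e^{-δs} ≤ 1 ≤ LHS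
    have hx : δ * s ≤ Real.exp (δ * s) := by
      have := Real.add_one_le_exp (δ * s); linarith
    have h2 : δ * s * Real.exp (-(δ * s)) ≤ 1 := by
      calc δ * s * Real.exp (-(δ * s))
          ≤ Real.exp (δ * s) * Real.exp (-(δ * s)) :=
            mul_le_mul_of_nonneg_right hx (Real.exp_pos _).le
        _ = 1 := by rw [← Real.exp_add]; simp
    have h1 : δ / 2 * ε ^ δ * L ≤ δ * s * Real.exp (-(δ * s)) := by
      rw [hεδ]
      calc δ / 2 * Real.exp (-(δ * s)) * L
          ≤ δ / 2 * Real.exp (-(δ * s)) * (2 * s) :=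
            mul_le_mul_of_nonneg_left hcase (by positivity)
        _ = δ * s * Real.exp (-(δ * s)) := by ring
    calc δ / 2 * ε ^ δ * L ≤ 1 := le_trans h1 h2
      _ ≤ Real.log (Real.exp 1 + ε * τ) := hL1'
  · push_neg at hcase
    have hkey : L - s ≤ Real.log (Real.exp 1 + ε * τ) := by
      have h : ε * (Real.exp 1 + τ) ≤ Real.exp 1 + ε * τ := by nlinarith
      have h2 := Real.log_le_log (by positivity) h
      rw [Real.log_mul (ne_of_gt hε0) (by positivity)] at h2
      simp only [hs, hL]; linarith
    have hεδ1 : ε ^ δ ≤ 1 := Real.rpow_le_one hε0.le hε1.le hδ0.le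
    have hhalf : δ / 2 * ε ^ δ ≤ 1 / 2 := by nlinarith
    have : δ / 2 * ε ^ δ * L ≤ 1 / 2 * L :=
      mul_le_mul_of_nonneg_right hhalf (by linarith)
    linarith
end

section
/- For all real numbers a > 0 and b > 0, log(e + a·b) ≤ log(e + a²) · log(e + b²). -/
theorem log_product_bound (a b : ℝ) (ha : 0 < a) (hb : 0 < b) :
    Real.log (Real.exp 1 + a * b) ≤
      Real.log (Real.exp 1 + a ^ 2) * Real.log (Real.exp 1 + b ^ 2) := by
  have he : (0:ℝ) < Real.exp 1 := Real.exp_pos 1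
  have h1 : 1 ≤ Real.log (Real.exp 1 + a ^ 2) := by
    calc (1:ℝ) = Real.log (Real.exp 1) := (Real.log_exp 1).symm
      _ ≤ _ := Real.log_le_log he (by nlinarith)
  have h2 : 1 ≤ Real.log (Real.exp 1 + b ^ 2) := by
    calc (1:ℝ) = Real.log (Real.exp 1) := (Real.log_exp 1).symm
      _ ≤ _ := Real.log_le_log he (by nlinarith)
  rcases le_total a b with h | h
  · have hab : a * b ≤ b ^ 2 := by nlinarith
    calc Real.log (Real.exp 1 + a * b) ≤ Real.log (Real.exp 1 + b ^ 2) :=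
          Real.log_le_log (by nlinarith) (by linarith)
      _ ≤ Real.log (Real.exp 1 + a ^ 2) * Real.log (Real.exp 1 + b ^ 2) :=
          le_mul_of_one_le_left (by linarith) h1
  · have hab : a * b ≤ a ^ 2 := by nlinarith
    calc Real.log (Real.exp 1 + a * b) ≤ Real.log (Real.exp 1 + a ^ 2) :=
          Real.log_le_log (by nlinarith) (by linarith)
      _ ≤ Real.log (Real.exp 1 + a ^ 2) * Real.log (Real.exp 1 + b ^ 2) :=
          le_mul_of_one_le_right (by linarith) h2
end

section
/- Let n ≥ 3, λ > 1, ν < −1, and define w₀(r) = r^{−n} · (log(1/r))^{−(ν+λ)/(λ−1)} for r ∈ (0,1). Define w₁(r) = (1/(n−2)) · ∫_r^1 ((ζ/r)^{n−2} − 1) · ζ · w₀(ζ) dζ. Then there exist constants c₁, c₂ > 0 and r₀ ∈ (0,1) such that c₁ · r^{2−n} · (log(1/r))^{−(1+ν)/(λ−1)} ≤ w₁(r) ≤ c₂ · r^{2−n} · (log(1/r))^{−(1+ν)/(λ−1)} for all r ∈ (0, r₀). -/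
/-!
Write `p = n - 2` and `b = -(1 + ν)/(λ - 1) > 0`, so that the exponent of the logarithm in `w₀` is
`b - 1`. Since `(ζ/r)^p ζ^{1-n} = r^{-p} ζ^{-1}`, the integrand of `w₁` is `(r^{-p} - ζ^{-p}) φ(ζ)`
with `φ(ζ) = ζ^{-1} log^{b-1}(1/ζ) ≥ 0`, whose primitive `-log^b(1/ζ)/b` gives
`∫_a^1 φ = log^b(1/a)/b`. Dropping `ζ^{-p}` gives the upper bound. For the lower bound, restrict to
`[√r, 1]`, where `ζ^{-p} ≤ r^{-p}/2` once `r ≤ 1/4`, and use `log(1/√r) = log(1/r)/2`.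
-/

open Real Set MeasureTheory intervalIntegral

section LogWeight

variable {a b : ℝ}

lemma inv_mul_neg_log_rpow_nonneg {x : ℝ} (hx0 : 0 < x) (hx1 : x ≤ 1) (c : ℝ) :
    0 ≤ x⁻¹ * (-log x) ^ c :=
  mul_nonneg (inv_nonneg.2 hx0.le) (rpow_nonneg (neg_nonneg.2 (log_nonpos hx0.le hx1)) c)

lemma hasDerivAt_neg_neg_log_rpow_div (hb : b ≠ 0) {x : ℝ} (hx0 : 0 < x) (hx1 : x < 1) :
    HasDerivAt (fun ζ => -((-log ζ) ^ b / b)) (x⁻¹ * (-log x) ^ (b - 1)) x := by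
  have hL : -log x ≠ 0 := (neg_pos.2 (log_neg hx0 hx1)).ne'
  refine ((((hasDerivAt_log hx0.ne').fun_neg).rpow_const (p := b) (Or.inl hL)).div_const
    b).fun_neg.congr_deriv ?_
  field_simp

lemma continuousOn_neg_neg_log_rpow_div (hb : 0 ≤ b) :
    ContinuousOn (fun ζ => -((-log ζ) ^ b / b)) (Ioi 0) :=
  (((continuousOn_log.mono fun _ hx => (ne_of_gt hx)).neg.rpow_const
    fun _ _ => Or.inr hb).div_const b).neg

lemma intervalIntegrable_inv_mul_neg_log_rpow (ha : 0 < a) (ha1 : a ≤ 1) (hb : 0 < b) :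
    IntervalIntegrable (fun ζ => ζ⁻¹ * (-log ζ) ^ (b - 1)) volume a 1 := by
  rw [intervalIntegrable_iff_integrableOn_Ioc_of_le ha1]
  exact integrableOn_deriv_of_nonneg
    ((continuousOn_neg_neg_log_rpow_div hb.le).mono fun _ hx => ha.trans_le hx.1)
    (fun x hx => hasDerivAt_neg_neg_log_rpow_div hb.ne' (ha.trans hx.1) hx.2)
    (fun x hx => inv_mul_neg_log_rpow_nonneg (ha.trans hx.1) hx.2.le _)

lemma integral_inv_mul_neg_log_rpow (ha : 0 < a) (ha1 : a ≤ 1) (hb : 0 < b) :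
    ∫ ζ in a..1, ζ⁻¹ * (-log ζ) ^ (b - 1) = (-log a) ^ b / b := by
  rw [integral_eq_sub_of_hasDerivAt_of_le ha1
    ((continuousOn_neg_neg_log_rpow_div hb.le).mono fun _ hx => ha.trans_le hx.1)
    (fun x hx => hasDerivAt_neg_neg_log_rpow_div hb.ne' (ha.trans hx.1) hx.2)
    (intervalIntegrable_inv_mul_neg_log_rpow ha ha1 hb)]
  simp [zero_rpow hb.ne']

end LogWeight

section Bounds

variable {r b q : ℝ}

lemma intervalIntegrable_sub_rpow_mul_inv_mul_neg_log_rpow (hr0 : 0 < r) (hr1 : r ≤ 1)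
    (hb : 0 < b) (q : ℝ) :
    IntervalIntegrable (fun ζ => (r ^ q - ζ ^ q) * (ζ⁻¹ * (-log ζ) ^ (b - 1))) volume r 1 :=
  (intervalIntegrable_inv_mul_neg_log_rpow hr0 hr1 hb).continuousOn_mul
    (continuousOn_const.sub (continuousOn_id.rpow_const fun x hx =>
      Or.inl (hr0.trans_le (by rw [uIcc_of_le hr1] at hx; exact hx.1)).ne'))

lemma integral_sub_rpow_mul_inv_mul_neg_log_rpow_le (hr0 : 0 < r) (hr1 : r ≤ 1) (hb : 0 < b)
    (q : ℝ) :
    ∫ ζ in r..1, (r ^ q - ζ ^ q) * (ζ⁻¹ * (-log ζ) ^ (b - 1)) ≤ r ^ q * ((-log r) ^ b / b) := by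
  rw [← integral_inv_mul_neg_log_rpow hr0 hr1 hb, ← intervalIntegral.integral_const_mul]
  refine integral_mono_on hr1 (intervalIntegrable_sub_rpow_mul_inv_mul_neg_log_rpow hr0 hr1 hb q)
    ((intervalIntegrable_inv_mul_neg_log_rpow hr0 hr1 hb).const_mul _) fun ζ hζ => ?_
  have hζ0 : 0 < ζ := hr0.trans_le hζ.1
  exact mul_le_mul_of_nonneg_right (sub_le_self _ (rpow_nonneg hζ0.le q))
    (inv_mul_neg_log_rpow_nonneg hζ0 hζ.2 _)

lemma le_integral_sub_rpow_mul_inv_mul_neg_log_rpow (hr0 : 0 < r) (hr : r ≤ 1 / 4) (hb : 0 < b)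
    (hq : q ≤ -1) :
    r ^ q * ((-log r) ^ b / b) / (2 * 2 ^ b) ≤
      ∫ ζ in r..1, (r ^ q - ζ ^ q) * (ζ⁻¹ * (-log ζ) ^ (b - 1)) := by
  have hr1 : r ≤ 1 := hr.trans (by norm_num)
  set s := √r with hs_def
  have hs0 : 0 < s := sqrt_pos.2 hr0
  have hs : s ≤ 1 / 2 := by
    rw [hs_def, sqrt_le_left (by norm_num)]
    linarith
  have hs1 : s ≤ 1 := hs.trans (by norm_num)
  have hrs : r ≤ s := by
    rw [hs_def, le_sqrt hr0.le hr0.le]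
    nlinarith
  have hlog : -log s = -log r / 2 := by rw [hs_def, log_sqrt hr0.le]; ring
  have hrq : r ^ q = s ^ q * s ^ q := by rw [← mul_rpow hs0.le hs0.le, mul_self_sqrt hr0.le]
  have two_le_rpow : 2 ≤ s ^ q :=
    calc (2 : ℝ) ≤ s⁻¹ := by rw [le_inv_comm₀ (by norm_num) hs0]; linarith
      _ = s ^ (-1 : ℝ) := (rpow_neg_one s).symm
      _ ≤ s ^ q := rpow_le_rpow_of_exponent_ge hs0 hs1 hq
  -- `ζ^q ≤ (√r)^q ≤ ((√r)^q)^2 / 2 = r^q / 2` because `(√r)^q ≥ 2`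
  have half_le : ∀ ζ ∈ Icc s 1, r ^ q / 2 * (ζ⁻¹ * (-log ζ) ^ (b - 1)) ≤
      (r ^ q - ζ ^ q) * (ζ⁻¹ * (-log ζ) ^ (b - 1)) := by
    intro ζ hζ
    have hζq : ζ ^ q ≤ s ^ q := rpow_le_rpow_of_nonpos hs0 hζ.1 (by linarith)
    refine mul_le_mul_of_nonneg_right ?_
      (inv_mul_neg_log_rpow_nonneg (hs0.trans_le hζ.1) hζ.2 _)
    nlinarith
  have nonneg : 0 ≤ᵐ[volume.restrict (Ioc r 1)]
      fun ζ => (r ^ q - ζ ^ q) * (ζ⁻¹ * (-log ζ) ^ (b - 1)) := by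
    filter_upwards [ae_restrict_mem measurableSet_Ioc] with ζ hζ
    exact mul_nonneg (sub_nonneg.2 (rpow_le_rpow_of_nonpos hr0 hζ.1.le (by linarith)))
      (inv_mul_neg_log_rpow_nonneg (hr0.trans hζ.1) hζ.2 _)
  calc r ^ q * ((-log r) ^ b / b) / (2 * 2 ^ b)
      = r ^ q / 2 * ((-log s) ^ b / b) := by
        rw [hlog, div_rpow (neg_nonneg.2 (log_nonpos hr0.le hr1)) zero_le_two]
        ring
    _ = ∫ ζ in s..1, r ^ q / 2 * (ζ⁻¹ * (-log ζ) ^ (b - 1)) := by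
        rw [intervalIntegral.integral_const_mul, integral_inv_mul_neg_log_rpow hs0 hs1 hb]
    _ ≤ ∫ ζ in s..1, (r ^ q - ζ ^ q) * (ζ⁻¹ * (-log ζ) ^ (b - 1)) :=
        integral_mono_on hs1 ((intervalIntegrable_inv_mul_neg_log_rpow hs0 hs1 hb).const_mul _)
          ((intervalIntegrable_sub_rpow_mul_inv_mul_neg_log_rpow hr0 hr1 hb q).mono_set
            (by rw [uIcc_of_le hs1, uIcc_of_le hr1]; exact Icc_subset_Icc_left hrs))
          half_le
    _ ≤ ∫ ζ in r..1, (r ^ q - ζ ^ q) * (ζ⁻¹ * (-log ζ) ^ (b - 1)) :=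
        integral_mono_interval hrs hs1 le_rfl nonneg
          (intervalIntegrable_sub_rpow_mul_inv_mul_neg_log_rpow hr0 hr1 hb q)

end Bounds

lemma div_rpow_sub_one_mul_mul_rpow_neg {r ζ : ℝ} (m : ℝ) (hr : 0 < r) (hζ : 0 < ζ) :
    ((ζ / r) ^ (m - 2) - 1) * ζ * ζ ^ (-m) = (r ^ (2 - m) - ζ ^ (2 - m)) * ζ⁻¹ := by
  rw [div_rpow hζ.le hr.le, rpow_sub hζ, rpow_sub hr, rpow_sub hζ, rpow_sub hr, rpow_neg hζ.le]
  simp only [rpow_two]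
  have := rpow_pos_of_pos hζ m
  have := rpow_pos_of_pos hr m
  field_simp

theorem w1_asymptotics (n : ℕ) (hn : 3 ≤ n) (lam ν : ℝ) (hlam : 1 < lam) (hν : ν < -1) :
    ∃ c₁ > (0 : ℝ), ∃ c₂ > (0 : ℝ), ∃ r₀ ∈ Set.Ioo (0 : ℝ) 1,
      ∀ r ∈ Set.Ioo (0 : ℝ) r₀,
        c₁ * r ^ (2 - (n : ℝ)) * (Real.log (1 / r)) ^ (-(1 + ν) / (lam - 1)) ≤
          (1 / ((n : ℝ) - 2)) * ∫ ζ in r..1, ((ζ / r) ^ ((n : ℝ) - 2) - 1) * ζ *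
            (ζ ^ (-(n : ℝ)) * (Real.log (1 / ζ)) ^ (-(ν + lam) / (lam - 1))) ∧
        (1 / ((n : ℝ) - 2)) * ∫ ζ in r..1, ((ζ / r) ^ ((n : ℝ) - 2) - 1) * ζ *
            (ζ ^ (-(n : ℝ)) * (Real.log (1 / ζ)) ^ (-(ν + lam) / (lam - 1))) ≤
          c₂ * r ^ (2 - (n : ℝ)) * (Real.log (1 / r)) ^ (-(1 + ν) / (lam - 1)) := by
  set b := -(1 + ν) / (lam - 1) with hb_def
  have hb : 0 < b := div_pos (by linarith) (by linarith)
  have hexp : -(ν + lam) / (lam - 1) = b - 1 := by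
    have : lam - 1 ≠ 0 := by linarith
    rw [hb_def]; field_simp; ring
  clear_value b
  have hn3 : (3 : ℝ) ≤ n := by exact_mod_cast hn
  have hp : 0 ≤ ((n : ℝ) - 2)⁻¹ := inv_nonneg.2 (by linarith)
  refine ⟨((n : ℝ) - 2)⁻¹ / (b * (2 * 2 ^ b)), div_pos (inv_pos.2 (by linarith)) (by positivity),
    ((n : ℝ) - 2)⁻¹ / b, div_pos (inv_pos.2 (by linarith)) hb, 1 / 4, ⟨by norm_num, by norm_num⟩,
    fun r ⟨hr0, hr⟩ => ?_⟩
  have hintegrand : ∫ ζ in r..1, ((ζ / r) ^ ((n : ℝ) - 2) - 1) * ζ *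
      (ζ ^ (-(n : ℝ)) * (log (1 / ζ)) ^ (-(ν + lam) / (lam - 1))) =
      ∫ ζ in r..1, (r ^ (2 - (n : ℝ)) - ζ ^ (2 - (n : ℝ))) * (ζ⁻¹ * (-log ζ) ^ (b - 1)) := by
    refine integral_congr fun ζ hζ => ?_
    rw [uIcc_of_le (by linarith)] at hζ
    simp only [one_div, log_inv, hexp, ← mul_assoc,
      div_rpow_sub_one_mul_mul_rpow_neg _ hr0 (hr0.trans_le hζ.1)]
  rw [hintegrand, one_div r, log_inv, one_div]
  constructor
  · calc _ = ((n : ℝ) - 2)⁻¹ * (r ^ (2 - (n : ℝ)) * ((-log r) ^ b / b) / (2 * 2 ^ b)) := by ring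
      _ ≤ _ := mul_le_mul_of_nonneg_left
          (le_integral_sub_rpow_mul_inv_mul_neg_log_rpow hr0 hr.le hb (by linarith)) hp
  · calc _ ≤ ((n : ℝ) - 2)⁻¹ * (r ^ (2 - (n : ℝ)) * ((-log r) ^ b / b)) :=
          mul_le_mul_of_nonneg_left
            (integral_sub_rpow_mul_inv_mul_neg_log_rpow_le hr0 (by linarith) hb _) hp
      _ = _ := by ring
end

section
/- Let λ ≤ 1, c > 0, s ∈ ℝ, and n ≥ 1. Then there exist k > 0 and l > 0 such that the function u(x) = exp(k/|x|^l) satisfies −div((x/|x|)·u(x)) ≥ c·|x|^s·u(x)^λ pointwise for all x ∈ ℝⁿ with 0 < |x| < 1. -/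
open scoped BigOperators

/-- Pointwise divergence of the radial vector field `(x/|x|)·u(x)`:
`div((x/|x|)u)(x) = Σᵢ ∂/∂xᵢ (xᵢ u(x)/|x|)`. -/
noncomputable def radialDiv {n : ℕ} (u : EuclideanSpace ℝ (Fin n) → ℝ)
    (x : EuclideanSpace ℝ (Fin n)) : ℝ :=
  ∑ i : Fin n, deriv (fun t : ℝ =>
    (x + t • EuclideanSpace.single i (1 : ℝ)) i *
      u (x + t • EuclideanSpace.single i (1 : ℝ)) /
      ‖x + t • EuclideanSpace.single i (1 : ℝ)‖) 0

/-!
For a radial function `y ↦ U ‖y‖` the divergence of `(x/|x|)·u` is `U'(r) + (n - 1) U(r) / r`.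
For `U(r) = exp (k r^(-l))` one has `-U'(r) = k l r^(-l-1) U(r)`; when `r < 1` and `l + 1 ≥ -s`,
the power `r^(-l-1)` dominates both `1/r` and `r^s`, so `k l = n + c` makes `-div` exceed
`c r^s U(r)`, and `U^λ ≤ U` because `U ≥ 1` and `λ ≤ 1`.
-/

open Real
open scoped RealInnerProductSpace

theorem hasDerivAt_norm_add_smul {E : Type*} [NormedAddCommGroup E] [InnerProductSpace ℝ E]
    {x : E} (hx : x ≠ 0) (v : E) :
    HasDerivAt (fun t : ℝ => ‖x + t • v‖) (⟪x, v⟫ / ‖x‖) 0 := by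
  have hline : HasDerivAt (fun t : ℝ => x + t • v) v 0 := by
    simpa using ((hasDerivAt_id (0 : ℝ)).smul_const v).const_add x
  have hsqrt := hline.norm_sq.sqrt (by simpa using hx)
  simp only [Real.sqrt_sq (norm_nonneg _), zero_smul, add_zero] at hsqrt
  convert hsqrt using 1
  field_simp

theorem hasDerivAt_coord_mul_comp_norm {n : ℕ} {V : ℝ → ℝ} {x : EuclideanSpace ℝ (Fin n)}
    (hx : x ≠ 0) (hV : DifferentiableAt ℝ V ‖x‖) (i : Fin n) :
    HasDerivAt (fun t : ℝ => (x + t • EuclideanSpace.single i (1 : ℝ)) i *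
        V ‖x + t • EuclideanSpace.single i (1 : ℝ)‖)
      (V ‖x‖ + x i ^ 2 * (deriv V ‖x‖ / ‖x‖)) 0 := by
  have hcoord : HasDerivAt (fun t : ℝ => x i + t) 1 0 := (hasDerivAt_id' 0).const_add (x i)
  have hnorm := hasDerivAt_norm_add_smul hx (EuclideanSpace.single i (1 : ℝ))
  rw [EuclideanSpace.inner_single_right, one_mul, conj_trivial] at hnorm
  have hcomp : HasDerivAt (fun t : ℝ => V ‖x + t • EuclideanSpace.single i (1 : ℝ)‖)
      (deriv V ‖x‖ * (x i / ‖x‖)) 0 :=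
    hV.hasDerivAt.comp_of_eq (0 : ℝ) hnorm (by simp)
  have hfun : (fun t : ℝ => (x + t • EuclideanSpace.single i (1 : ℝ)) i *
      V ‖x + t • EuclideanSpace.single i (1 : ℝ)‖) =
      fun t => (x i + t) * V ‖x + t • EuclideanSpace.single i (1 : ℝ)‖ := by
    funext t
    simp
  rw [hfun]
  refine (hcoord.mul hcomp).congr_deriv ?_
  simp only [zero_smul, add_zero]
  ring

theorem radialDiv_comp_norm {n : ℕ} {U : ℝ → ℝ} {x : EuclideanSpace ℝ (Fin n)} (hx : x ≠ 0)
    (hU : DifferentiableAt ℝ U ‖x‖) :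
    radialDiv (fun y => U ‖y‖) x = deriv U ‖x‖ + (n - 1) / ‖x‖ * U ‖x‖ := by
  have hr : ‖x‖ ≠ 0 := norm_ne_zero_iff.mpr hx
  have hV : HasDerivAt (fun r => U r / r) ((deriv U ‖x‖ * ‖x‖ - U ‖x‖ * 1) / ‖x‖ ^ 2) ‖x‖ :=
    hU.hasDerivAt.div (hasDerivAt_id _) hr
  have hsum : ∑ i : Fin n, x i ^ 2 = ‖x‖ ^ 2 := by
    simp [EuclideanSpace.norm_sq_eq]
  unfold radialDiv
  simp_rw [mul_div_assoc]
  rw [Finset.sum_congr rfl fun i _ => (hasDerivAt_coord_mul_comp_norm hx hV.differentiableAt i).deriv]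
  rw [Finset.sum_add_distrib, ← Finset.sum_mul, hsum, hV.deriv, Finset.sum_const,
    Finset.card_univ, Fintype.card_fin, nsmul_eq_mul]
  field_simp
  ring

theorem hasDerivAt_exp_div_rpow (k l : ℝ) {r : ℝ} (hr : 0 < r) :
    HasDerivAt (fun r => exp (k / r ^ l)) (-(k * l * r ^ (-(l + 1))) * exp (k / r ^ l)) r := by
  have hpow : HasDerivAt (fun r => r ^ (-l)) (-l * r ^ (-l - 1)) r :=
    hasDerivAt_rpow_const (Or.inl hr.ne')
  have hexp := (hpow.const_mul k).exp
  refine (hexp.congr_of_eventuallyEq ?_).congr_deriv ?_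
  · filter_upwards [lt_mem_nhds hr] with y hy
    rw [rpow_neg hy.le, div_eq_mul_inv]
  · rw [rpow_neg hr.le, ← div_eq_mul_inv, neg_add', sub_eq_add_neg]
    ring

theorem div_add_mul_rpow_le_mul_rpow_neg {a c r s l : ℝ} (ha : 0 ≤ a) (hc : 0 ≤ c) (hr₀ : 0 < r)
    (hr₁ : r ≤ 1) (hl : 0 ≤ l) (hs : -(l + 1) ≤ s) :
    a / r + c * r ^ s ≤ (a + c) * r ^ (-(l + 1)) := by
  have hinv : r⁻¹ ≤ r ^ (-(l + 1)) := by
    rw [← rpow_neg_one]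
    exact rpow_le_rpow_of_exponent_ge hr₀ hr₁ (by linarith)
  have hpow : r ^ s ≤ r ^ (-(l + 1)) := rpow_le_rpow_of_exponent_ge hr₀ hr₁ hs
  rw [div_eq_mul_inv, add_mul]
  gcongr

theorem first_order_counterexample_subcritical_general (n : ℕ) (lam s c : ℝ)
    (hlam : lam ≤ 1) (hc : 0 < c) :
    ∃ k > (0 : ℝ), ∃ l > (0 : ℝ), ∀ x : EuclideanSpace ℝ (Fin n), 0 < ‖x‖ → ‖x‖ < 1 →
      -radialDiv (fun y => Real.exp (k / ‖y‖ ^ l)) x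
        ≥ c * ‖x‖ ^ s * Real.exp (k / ‖x‖ ^ l) ^ lam := by
  set l : ℝ := max 1 (-s - 1)
  have hl : 0 < l := one_pos.trans_le (le_max_left _ _)
  set k : ℝ := (n + c) / l
  have hkl : k * l = n + c := div_mul_cancel₀ _ hl.ne'
  refine ⟨k, by positivity, l, hl, fun x hx hx₁ => ?_⟩
  have hU := hasDerivAt_exp_div_rpow k l hx
  rw [radialDiv_comp_norm (norm_pos_iff.mp hx) hU.differentiableAt, hU.deriv]
  set r := ‖x‖
  set U := exp (k / r ^ l)
  have hU_rpow : U ^ lam ≤ U := by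
    simpa using rpow_le_rpow_of_exponent_le (one_le_exp (by positivity)) hlam
  have hbound : (n - 1) / r + c * r ^ s ≤ k * l * r ^ (-(l + 1)) := calc
    (n - 1) / r + c * r ^ s ≤ n / r + c * r ^ s := by gcongr; linarith
    _ ≤ k * l * r ^ (-(l + 1)) :=
      hkl ▸ div_add_mul_rpow_le_mul_rpow_neg n.cast_nonneg hc.le hx hx₁.le hl.le
        (by linarith [le_max_right 1 (-s - 1)])
  calc c * r ^ s * U ^ lam ≤ c * r ^ s * U := by gcongr
    _ ≤ (k * l * r ^ (-(l + 1)) - (n - 1) / r) * U := by gcongr; linarith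
    _ = _ := by ring

theorem first_order_counterexample_subcritical (n : ℕ) (hn : 1 ≤ n) (lam s c : ℝ)
    (hlam : lam ≤ 1) (hc : 0 < c) :
    ∃ k > (0 : ℝ), ∃ l > (0 : ℝ), ∀ x : EuclideanSpace ℝ (Fin n), 0 < ‖x‖ → ‖x‖ < 1 →
      -radialDiv (fun y => Real.exp (k / ‖y‖ ^ l)) x
        ≥ c * ‖x‖ ^ s * Real.exp (k / ‖x‖ ^ l) ^ lam :=
  first_order_counterexample_subcritical_general n lam s c hlam hc
end

section
/- Let ν > m, s > −m, c > 0, and m, n positive integers with m = 2 and n ≥ 2. Then there exists k > 0 such that the radial function u(r) = exp(k·r^{(s+m)/(m−ν)}) satisfies u''(r) + ((n−1)/r)·u'(r) ≥ c·r^s·u(r)·(log(e + u(r)))^ν for all r ∈ (0, r₀), for some r₀ ∈ (0,1). -/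
set_option maxHeartbeats 1000000 in

theorem second_order_counterexample (n : ℕ) (hn : 2 ≤ n) (ν s c : ℝ)
    (hν : 2 < ν) (hs : -2 < s) (hc : 0 < c) :
    ∃ k > (0 : ℝ), ∃ r₀ ∈ Set.Ioo (0 : ℝ) 1, ∀ r ∈ Set.Ioo (0 : ℝ) r₀,
      deriv (deriv (fun t : ℝ => Real.exp (k * t ^ ((s + 2) / (2 - ν))))) r +
          (((n : ℝ) - 1) / r) * deriv (fun t : ℝ => Real.exp (k * t ^ ((s + 2) / (2 - ν)))) r
        ≥ c * r ^ s * Real.exp (k * r ^ ((s + 2) / (2 - ν))) *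
            (Real.log (Real.exp 1 + Real.exp (k * r ^ ((s + 2) / (2 - ν))))) ^ ν := by
  set α := (s + 2) / (2 - ν) with hαdef
  have h2ν : (2:ℝ) - ν ≠ 0 := by intro h; linarith [h]
  have hα : α < 0 := div_neg_of_pos_of_neg (by linarith) (by linarith)
  have hkeym : α * (2 - ν) = s + 2 := div_mul_cancel₀ _ h2ν
  have hexp : s + α * ν = 2*α - 2 := by linear_combination -hkeym
  -- choice of k
  have hα2 : (0:ℝ) < α^2 := by nlinarith [mul_pos_of_neg_of_neg hα hα]
  have hX : (0:ℝ) < α^2 / (c * 2 ^ (ν+1)) := by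
    apply div_pos hα2 (by positivity)
  set K := (α^2 / (c * 2 ^ (ν+1))) ^ (ν-2)⁻¹ with hKdef
  have hK : 0 < K := Real.rpow_pos_of_pos hX _
  set k := min 1 K with hkdef
  have hk0 : 0 < k := lt_min one_pos hK
  have hk2 : c * 2 ^ ν * k ^ ν ≤ k^2 * α^2 / 2 := by
    have h1 : k ^ (ν-2) ≤ α^2 / (c * 2 ^ (ν+1)) := by
      calc k ^ (ν-2) ≤ K ^ (ν-2) :=
            Real.rpow_le_rpow hk0.le (min_le_right _ _) (by linarith)
        _ = α^2 / (c * 2 ^ (ν+1)) := Real.rpow_inv_rpow hX.le (by intro h; linarith [h])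
    have h2 : k ^ ν = k^2 * k ^ (ν-2) := by
      rw [show ν = 2 + (ν-2) by ring, Real.rpow_add hk0,
        show ((2:ℝ)+(ν-2)-2) = ν - 2 by ring,
        show ((2:ℝ) : ℝ) = ((2:ℕ):ℝ) by norm_num, Real.rpow_natCast]
    have h3 : (2:ℝ) ^ (ν+1) = 2 ^ ν * 2 := by
      rw [Real.rpow_add (by norm_num), Real.rpow_one]
    have h4 : c * 2 ^ ν * k ^ (ν-2) ≤ α^2 / 2 := by
      rw [h3] at h1
      have h2pos : (0:ℝ) < 2 ^ ν := Real.rpow_pos_of_pos (by norm_num) _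
      rw [le_div_iff₀ (by norm_num : (0:ℝ) < 2)]
      calc c * 2 ^ ν * k ^ (ν-2) * 2 ≤ c * 2 ^ ν * (α^2 / (c * (2 ^ ν * 2))) * 2 := by
            have := mul_le_mul_of_nonneg_left h1 (by positivity : (0:ℝ) ≤ c * 2 ^ ν)
            linarith [this]
        _ = α^2 := by field_simp
    calc c * 2 ^ ν * k ^ ν = (c * 2 ^ ν * k ^ (ν-2)) * k^2 := by rw [h2]; ring
      _ ≤ (α^2/2) * k^2 := by
          apply mul_le_mul_of_nonneg_right h4 (by positivity)
      _ = k^2 * α^2 / 2 := by ring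
  -- choice of r₀
  set p := -α with hpdef
  have hp : 0 < p := by rw [hpdef]; linarith
  have hαp : α = -p := by rw [hpdef, neg_neg]
  set C := k * |α| * |α + (n:ℝ) - 2| with hCdef
  have hC : 0 ≤ C := by positivity
  set T := k^2 * α^2 / 2 with hTdef
  have hT : 0 < T := by
    have h := mul_pos (mul_pos (pow_pos hk0 2) hα2) (by norm_num : (0:ℝ) < 2⁻¹)
    rw [hTdef]; linarith [h]
  set δ := T / (C + 1) with hδdef
  have hδ : 0 < δ := div_pos hT (by linarith)
  set M := min k δ with hMdef
  have hM : 0 < M := lt_min hk0 hδ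
  refine ⟨k, hk0, min (1/2) (M ^ p⁻¹), ⟨lt_min (by norm_num) (Real.rpow_pos_of_pos hM _),
    lt_of_le_of_lt (min_le_left _ _) (by norm_num)⟩, ?_⟩
  intro r hr
  obtain ⟨hr0, hr1⟩ := hr
  have hrM : r ^ p < M := by
    have h := Real.rpow_lt_rpow hr0.le (lt_of_lt_of_le hr1 (min_le_right _ _)) hp
    rwa [Real.rpow_inv_rpow hM.le hp.ne'] at h
  have hyp : (0:ℝ) < r ^ p := Real.rpow_pos_of_pos hr0 _
  have hrpa : r ^ α = (r ^ p)⁻¹ := by rw [hαp, Real.rpow_neg hr0.le]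
  -- condition (i): 1 ≤ k * r^α
  have hc1 : 1 ≤ k * r ^ α := by
    rw [hrpa, ← div_eq_mul_inv, le_div_iff₀ hyp, one_mul]
    exact le_of_lt (lt_of_lt_of_le hrM (min_le_left _ _))
  -- condition (ii): C * r^p ≤ T
  have hc2 : C * r ^ p ≤ T := by
    have hrδ : r ^ p ≤ δ := le_of_lt (lt_of_lt_of_le hrM (min_le_right _ _))
    calc C * r ^ p ≤ C * δ := mul_le_mul_of_nonneg_left hrδ hC
      _ ≤ T := by
          rw [hδdef, mul_comm, div_mul_eq_mul_div, div_le_iff₀ (by linarith : (0:ℝ) < C + 1)]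
          linarith [hT.le]
  -- derivative computations
  have hderiv : ∀ t > (0:ℝ), HasDerivAt (fun t : ℝ => Real.exp (k * t ^ α))
      (Real.exp (k * t ^ α) * (k * (α * t ^ (α-1)))) t := by
    intro t ht
    exact ((Real.hasDerivAt_rpow_const (Or.inl ht.ne')).const_mul k).exp
  have heq : deriv (fun t : ℝ => Real.exp (k * t ^ α)) =ᶠ[nhds r]
      (fun t => Real.exp (k * t ^ α) * (k * (α * t ^ (α-1)))) := by
    filter_upwards [isOpen_Ioi.mem_nhds hr0] with t ht
    exact (hderiv t ht).deriv
  have hw : HasDerivAt (fun t : ℝ => k * (α * t ^ (α-1)))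
      (k * (α * ((α-1) * r ^ (α-1-1)))) r :=
    ((Real.hasDerivAt_rpow_const (Or.inl hr0.ne')).const_mul α).const_mul k
  have hv : HasDerivAt (fun t => Real.exp (k * t ^ α) * (k * (α * t ^ (α-1))))
      (Real.exp (k * r ^ α) * (k * (α * r ^ (α-1))) * (k * (α * r ^ (α-1)))
        + Real.exp (k * r ^ α) * (k * (α * ((α-1) * r ^ (α-1-1))))) r :=
    (hderiv r hr0).mul hw
  have hd1 : deriv (fun t : ℝ => Real.exp (k * t ^ α)) r
      = Real.exp (k * r ^ α) * (k * (α * r ^ (α-1))) := (hderiv r hr0).deriv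
  have hd2 : deriv (deriv (fun t : ℝ => Real.exp (k * t ^ α))) r
      = Real.exp (k * r ^ α) * (k * (α * r ^ (α-1))) * (k * (α * r ^ (α-1)))
        + Real.exp (k * r ^ α) * (k * (α * ((α-1) * r ^ (α-1-1)))) := by
    rw [Filter.EventuallyEq.deriv_eq heq]
    exact hv.deriv
  rw [hd1, hd2]
  set E := Real.exp (k * r ^ α) with hEdef
  have hE : 0 < E := Real.exp_pos _
  set a := r ^ (α-1) with hadef
  have h2a : r ^ (2*α-2) = a * a := by
    rw [hadef, ← Real.rpow_add hr0]; congr 1; ring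
  have hd : r ^ (α-2) = a / r := by
    rw [hadef, ← Real.rpow_sub_one hr0.ne']; congr 1; ring
  have hpr : r ^ p * r ^ (2*α-2) = r ^ (α-2) := by
    rw [← Real.rpow_add hr0]; congr 1; rw [hpdef]; ring
  have hR2 : (0:ℝ) < r ^ (2*α-2) := Real.rpow_pos_of_pos hr0 _
  -- LHS lower bound
  have hq : k * α * (α + (n:ℝ) - 2) * r ^ p ≥ -T := by
    have habs : |k * α * (α + (n:ℝ) - 2) * r ^ p| = C * r ^ p := by
      rw [abs_mul, abs_mul, abs_mul, abs_of_pos hk0, abs_of_pos hyp, hCdef]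
    have h1 : -(C * r ^ p) ≤ k * α * (α + (n:ℝ) - 2) * r ^ p := by
      rw [← habs]; exact neg_abs_le _
    linarith [hc2]
  have hLHS : E * (k * (α * a)) * (k * (α * a)) + E * (k * (α * ((α-1) * r ^ (α-1-1))))
      + (((n:ℝ) - 1) / r) * (E * (k * (α * a)))
      ≥ T * (r ^ (2*α-2) * E) := by
    have hrw : r ^ (α-1-1) = a / r := by
      rw [show α-1-1 = α-2 by ring]; exact hd
    rw [hrw]
    have hEq : E * (k * (α * a)) * (k * (α * a)) + E * (k * (α * ((α-1) * (a/r))))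
        + (((n:ℝ) - 1) / r) * (E * (k * (α * a)))
        = (k^2 * α^2 + (k * α * (α + (n:ℝ) - 2)) * r ^ p) * (r ^ (2*α-2) * E) := by
      have h1 : (k * α * (α + (n:ℝ) - 2)) * r ^ p * (r ^ (2*α-2) * E)
          = (k * α * (α + (n:ℝ) - 2)) * (a / r) * E := by
        rw [← hd, ← hpr]; ring
      have h2 : k^2 * α^2 * (r ^ (2*α-2) * E) = k^2 * α^2 * (a * a) * E := by
        rw [h2a]; ring
      rw [add_mul, h1, h2]
      field_simp
      ring
    rw [hEq]
    have hbr : k^2 * α^2 + (k * α * (α + (n:ℝ) - 2)) * r ^ p ≥ T := by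
      have h2T : k^2 * α^2 = 2 * T := by rw [hTdef]; ring
      linarith [hq]
    exact mul_le_mul_of_nonneg_right hbr (le_of_lt (mul_pos hR2 hE))
  -- RHS upper bound
  have hRHS : c * r ^ s * E * (Real.log (Real.exp 1 + E)) ^ ν ≤ T * (r ^ (2*α-2) * E) := by
    have hEe : Real.exp 1 ≤ E := by
      rw [hEdef]; exact Real.exp_le_exp.mpr hc1
    have hL0 : 0 ≤ Real.log (Real.exp 1 + E) := by
      apply Real.log_nonneg
      linarith [Real.add_one_le_exp 1, hE.le]
    have hlog2 : Real.log 2 ≤ 1 := by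
      rw [← Real.log_exp 1]
      exact Real.log_le_log (by norm_num) (by linarith [Real.add_one_le_exp 1])
    have hL : Real.log (Real.exp 1 + E) ≤ 2 * (k * r ^ α) := by
      calc Real.log (Real.exp 1 + E) ≤ Real.log (2 * E) := by
            apply Real.log_le_log (by positivity)
            linarith
        _ = Real.log 2 + (k * r ^ α) := by
            rw [Real.log_mul (by norm_num) hE.ne', hEdef, Real.log_exp]
        _ ≤ 2 * (k * r ^ α) := by linarith
    have hLν : (Real.log (Real.exp 1 + E)) ^ ν ≤ (2 * (k * r ^ α)) ^ ν :=
      Real.rpow_le_rpow hL0 hL (by linarith)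
    have hra : (0:ℝ) < r ^ α := Real.rpow_pos_of_pos hr0 _
    have hpow : (2 * (k * r ^ α)) ^ ν = 2 ^ ν * k ^ ν * r ^ (α * ν) := by
      rw [show (2:ℝ) * (k * r ^ α) = (2 * k) * r ^ α by ring,
        Real.mul_rpow (by positivity) hra.le, Real.mul_rpow (by norm_num) hk0.le,
        ← Real.rpow_mul hr0.le]
    have hexp2 : r ^ s * r ^ (α * ν) = r ^ (2*α-2) := by
      rw [← Real.rpow_add hr0, hexp]
    calc c * r ^ s * E * (Real.log (Real.exp 1 + E)) ^ ν
        ≤ c * r ^ s * E * (2 ^ ν * k ^ ν * r ^ (α * ν)) := by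
          apply mul_le_mul_of_nonneg_left (le_trans hLν (le_of_eq hpow))
          positivity
      _ = (c * 2 ^ ν * k ^ ν) * (r ^ s * r ^ (α * ν)) * E := by ring
      _ = (c * 2 ^ ν * k ^ ν) * r ^ (2*α-2) * E := by rw [hexp2]
      _ ≤ T * (r ^ (2*α-2) * E) := by
          have := mul_le_mul_of_nonneg_right hk2 (le_of_lt (mul_pos hR2 hE))
          linarith [this]
  calc E * (k * (α * a)) * (k * (α * a)) + E * (k * (α * ((α-1) * r ^ (α-1-1))))
      + (((n:ℝ) - 1) / r) * (E * (k * (α * a)))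
      ≥ T * (r ^ (2*α-2) * E) := hLHS
    _ ≥ c * r ^ s * E * (Real.log (Real.exp 1 + E)) ^ ν := hRHS
end

section
/- Let h : (0,∞) → (0,∞) be positive and non-decreasing, μ ∈ (0,1], and k > 0. If ∫_1^∞ h(kζ)^{−μ} ζ^{μ−1} dζ < ∞, then ∫_1^∞ dζ/h(kζ) < ∞. -/
open MeasureTheory Set
open scoped ENNReal

/-!
Write `f ζ = h (k ζ)` and `w ζ = f ζ ^ (-μ) * ζ ^ (μ - 1)`. Since `f` is non-decreasing, `w` is
non-increasing, so `∫_1^ζ w ≥ (ζ - 1) w ζ ≥ (ζ / f ζ) ^ μ / 2` for `ζ ≥ 2`: the finiteness of `∫ w`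
forces `f ζ ≥ c ζ` for some `c > 0`. Then `1 / f ζ = w ζ * (ζ / f ζ) ^ (1 - μ) ≤ c ^ (μ - 1) w ζ`.
-/

theorem setLIntegral_Ioi_lt_top_of_le_of_le_mul {F G : ℝ → ℝ≥0∞} {a b : ℝ} {M C : ℝ≥0∞}
    (hab : a ≤ b) (hM : M ≠ ∞) (hC : C ≠ ∞) (hG : ∫⁻ x in Ioi a, G x < ∞)
    (hle : ∀ x ∈ Ioc a b, F x ≤ M) (hle_mul : ∀ x ∈ Ioi b, F x ≤ C * G x) :
    ∫⁻ x in Ioi a, F x < ∞ := by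
  rw [← Ioc_union_Ioi_eq_Ioi hab, lintegral_union measurableSet_Ioi Ioc_disjoint_Ioi_same]
  refine ENNReal.add_lt_top.mpr ⟨?_, ?_⟩
  · calc ∫⁻ x in Ioc a b, F x ≤ ∫⁻ _ in Ioc a b, M := setLIntegral_mono' measurableSet_Ioc hle
      _ = M * volume (Ioc a b) := setLIntegral_const _ _
      _ < ∞ := by simpa [Real.volume_Ioc] using ENNReal.mul_lt_top hM.lt_top ENNReal.ofReal_lt_top
  · calc ∫⁻ x in Ioi b, F x ≤ ∫⁻ x in Ioi b, C * G x := setLIntegral_mono' measurableSet_Ioi hle_mul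
      _ = C * ∫⁻ x in Ioi b, G x := lintegral_const_mul' C G hC
      _ ≤ C * ∫⁻ x in Ioi a, G x := by gcongr
      _ < ∞ := ENNReal.mul_lt_top hC.lt_top hG

theorem one_div_eq_rpow_neg_mul_rpow_sub_one_mul_div_rpow {x y : ℝ} (hx : 0 < x) (hy : 0 < y)
    (μ : ℝ) : 1 / y = y ^ (-μ) * x ^ (μ - 1) * (x / y) ^ (1 - μ) := by
  rw [Real.div_rpow hx.le hy.le, mul_assoc, mul_div_assoc', ← Real.rpow_add hx,
    show μ - 1 + (1 - μ) = 0 by ring, Real.rpow_zero, mul_one_div, ← Real.rpow_sub hy,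
    show -μ - (1 - μ) = -1 by ring, Real.rpow_neg_one, one_div]

theorem one_div_le_of_div_rpow_le {x y μ A : ℝ} (hx : 0 < x) (hy : 0 < y) (hμ : 0 < μ)
    (hμ1 : μ ≤ 1) (hA : (x / y) ^ μ ≤ A) :
    1 / y ≤ A ^ ((1 - μ) / μ) * (y ^ (-μ) * x ^ (μ - 1)) := by
  have hxy : 0 ≤ x / y := by positivity
  have : (x / y) ^ (1 - μ) ≤ A ^ ((1 - μ) / μ) := by
    calc (x / y) ^ (1 - μ) = ((x / y) ^ μ) ^ ((1 - μ) / μ) := by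
          rw [← Real.rpow_mul hxy, mul_div_cancel₀ _ hμ.ne']
      _ ≤ A ^ ((1 - μ) / μ) :=
          Real.rpow_le_rpow (by positivity) hA (div_nonneg (by linarith) hμ.le)
  rw [one_div_eq_rpow_neg_mul_rpow_sub_one_mul_div_rpow hx hy μ, mul_comm]
  exact mul_le_mul_of_nonneg_right this (by positivity)

theorem MonotoneOn.pos_of_le {f : ℝ → ℝ} {a x : ℝ} (hf : MonotoneOn f (Ici a)) (ha : 0 < f a)
    (hx : a ≤ x) : 0 < f x :=
  ha.trans_le (hf self_mem_Ici hx hx)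

section Monotone

variable {f : ℝ → ℝ} (hf : MonotoneOn f (Ici 1)) (hf1 : 0 < f 1)
include hf hf1

theorem antitoneOn_rpow_neg_mul_rpow_sub_one {μ : ℝ} (hμ : 0 ≤ μ) (hμ1 : μ ≤ 1) :
    AntitoneOn (fun x => f x ^ (-μ) * x ^ (μ - 1)) (Ici 1) := by
  intro x hx y hy hxy
  have hfx : 0 < f x := hf.pos_of_le hf1 hx
  exact mul_le_mul (Real.rpow_le_rpow_of_nonpos hfx (hf hx hy hxy) (by linarith))
    (Real.rpow_le_rpow_of_nonpos (zero_lt_one.trans_le hx) hxy (by linarith))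
    (Real.rpow_nonneg (zero_le_one.trans (mem_Ici.mp hy)) _) (Real.rpow_nonneg hfx.le _)

theorem ofReal_div_rpow_le_two_mul_setLIntegral {μ ζ : ℝ} (hμ : 0 ≤ μ) (hμ1 : μ ≤ 1)
    (hζ : 2 ≤ ζ) :
    ENNReal.ofReal ((ζ / f ζ) ^ μ) ≤
      2 * ∫⁻ s in Ioi 1, ENNReal.ofReal (f s ^ (-μ) * s ^ (μ - 1)) := by
  have hζ0 : 0 < ζ := by linarith
  have hfζ : 0 < f ζ := hf.pos_of_le hf1 (by linarith)
  set c := f ζ ^ (-μ) * ζ ^ (μ - 1) with hc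
  have hc0 : 0 ≤ c := by positivity
  calc ENNReal.ofReal ((ζ / f ζ) ^ μ) = ENNReal.ofReal (ζ * c) := by
        rw [hc, Real.div_rpow hζ0.le hfζ.le, Real.rpow_neg hfζ.le, Real.rpow_sub_one hζ0.ne']
        field_simp
    _ ≤ ENNReal.ofReal (2 * ((ζ - 1) * c)) := ENNReal.ofReal_le_ofReal (by nlinarith)
    _ = 2 * (ENNReal.ofReal c * volume (Ioc 1 ζ)) := by
        rw [Real.volume_Ioc, ENNReal.ofReal_mul zero_le_two, ENNReal.ofReal_mul (by linarith),
          mul_comm (ENNReal.ofReal (ζ - 1)), ENNReal.ofReal_ofNat]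
    _ = 2 * ∫⁻ _ in Ioc 1 ζ, ENNReal.ofReal c := by rw [setLIntegral_const]
    _ ≤ 2 * ∫⁻ s in Ioc 1 ζ, ENNReal.ofReal (f s ^ (-μ) * s ^ (μ - 1)) := by
        gcongr 2 * ?_
        refine setLIntegral_mono' measurableSet_Ioc fun s hs => ENNReal.ofReal_le_ofReal ?_
        exact antitoneOn_rpow_neg_mul_rpow_sub_one hf hf1 hμ hμ1 (mem_Ici.mpr hs.1.le)
          (mem_Ici.mpr (by linarith)) hs.2
    _ ≤ 2 * ∫⁻ s in Ioi 1, ENNReal.ofReal (f s ^ (-μ) * s ^ (μ - 1)) := by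
        gcongr 2 * ?_
        exact lintegral_mono_set Ioc_subset_Ioi_self

theorem setLIntegral_one_div_lt_top_of_setLIntegral_rpow_lt_top {μ : ℝ} (hμ : 0 < μ)
    (hμ1 : μ ≤ 1) (hfin : ∫⁻ ζ in Ioi 1, ENNReal.ofReal (f ζ ^ (-μ) * ζ ^ (μ - 1)) < ∞) :
    ∫⁻ ζ in Ioi 1, ENNReal.ofReal (1 / f ζ) < ∞ := by
  set A := 2 * (∫⁻ ζ in Ioi 1, ENNReal.ofReal (f ζ ^ (-μ) * ζ ^ (μ - 1))).toReal
  refine setLIntegral_Ioi_lt_top_of_le_of_le_mul (M := ENNReal.ofReal (1 / f 1))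
    (C := ENNReal.ofReal (A ^ ((1 - μ) / μ))) one_le_two ENNReal.ofReal_ne_top
    ENNReal.ofReal_ne_top hfin (fun x hx => ?_) (fun x hx => ?_)
  · exact ENNReal.ofReal_le_ofReal <|
      one_div_le_one_div_of_le hf1 (hf self_mem_Ici (mem_Ici.mpr hx.1.le) hx.1.le)
  · have hx : 2 < x := hx
    have hA : (x / f x) ^ μ ≤ A := by
      have := ofReal_div_rpow_le_two_mul_setLIntegral hf hf1 hμ.le hμ1 hx.le
      rwa [ENNReal.ofReal_le_iff_le_toReal (ENNReal.mul_ne_top ENNReal.ofNat_ne_top hfin.ne),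
        ENNReal.toReal_mul, ENNReal.toReal_ofNat] at this
    rw [← ENNReal.ofReal_mul (by positivity)]
    exact ENNReal.ofReal_le_ofReal <|
      one_div_le_of_div_rpow_le (by linarith) (hf.pos_of_le hf1 (by linarith)) hμ hμ1 hA

end Monotone

theorem finiteness_of_reciprocal_integral (h : ℝ → ℝ) (hpos : ∀ t > (0 : ℝ), 0 < h t)
    (hmono : ∀ t₁ t₂ : ℝ, 0 < t₁ → t₁ ≤ t₂ → h t₁ ≤ h t₂)
    (μ : ℝ) (hμ : 0 < μ) (hμ1 : μ ≤ 1) (k : ℝ) (hk : 0 < k)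
    (hfin : ∫⁻ ζ in Set.Ioi (1 : ℝ),
      ENNReal.ofReal (h (k * ζ) ^ (-μ) * ζ ^ (μ - 1)) < ⊤) :
    ∫⁻ ζ in Set.Ioi (1 : ℝ), ENNReal.ofReal (1 / h (k * ζ)) < ⊤ := by
  have hf : MonotoneOn (fun ζ => h (k * ζ)) (Ici 1) := fun x hx y _ hxy =>
    hmono _ _ (mul_pos hk (zero_lt_one.trans_le hx)) (mul_le_mul_of_nonneg_left hxy hk.le)
  exact setLIntegral_one_div_lt_top_of_setLIntegral_rpow_lt_top hf
    (hpos _ (by simpa using hk)) hμ hμ1 hfin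
end
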